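/- Suppose that for some k ≥ 2 every k-uniform linear hypergraph H' satisfies τ(H') ≤ (n(H') + m(H'))/(k+1). Then no k-uniform linear hypergraph H with at least one vertex of degree greater than k can achieve equality: if H has a vertex x of degree d > k, then τ(H) < (n(H) + m(H))/(k+1). -/

import Mathlib

structure UHypergraph (α : Type) where
  verts : Finset α
  edges : Finset (Finset α)
deriving DecidableEq

namespace UHypergraph

variable {α : Type} [DecidableEq α]

/-- All edges are subsets of the vertex set. -/
def Wellformed (H : UHypergraph α) : Prop := ∀ e ∈ H.edges, e ⊆ H.verts

/-- Every edge has exactly `k` vertices. -/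
def Uniform (H : UHypergraph α) (k : ℕ) : Prop := ∀ e ∈ H.edges, e.card = k

/-- Any two distinct edges intersect in at most one vertex. -/
def Linear (H : UHypergraph α) : Prop :=
  ∀ e ∈ H.edges, ∀ f ∈ H.edges, e ≠ f → (e ∩ f).card ≤ 1

/-- `T` is a transversal: a set of vertices meeting every edge. -/
def IsTransversal (H : UHypergraph α) (T : Finset α) : Prop :=
  T ⊆ H.verts ∧ ∀ e ∈ H.edges, (T ∩ e).Nonempty

/-- The transversal number: minimum size of a transversal. -/
noncomputable def tau (H : UHypergraph α) : ℕ :=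
  sInf {n : ℕ | ∃ T : Finset α, H.IsTransversal T ∧ T.card = n}

/-- The degree of a vertex: the number of edges containing it. -/
def degree (H : UHypergraph α) (v : α) : ℕ := (H.edges.filter (fun e => v ∈ e)).card

/-- Every vertex lies in exactly `r` edges. -/
def Regular (H : UHypergraph α) (r : ℕ) : Prop := ∀ v ∈ H.verts, H.degree v = r

/-- Delete a set `X` of vertices together with all edges meeting `X`. -/
def delete (H : UHypergraph α) (X : Finset α) : UHypergraph α :=
  ⟨H.verts \ X, H.edges.filter (fun e => ∀ x ∈ X, x ∉ e)⟩

end UHypergraph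

/-! Adding `x` to a minimum transversal of `H - x` gives a transversal of `H`, so for a vertex `x`
of degree `d ≥ k + 1` the bound for `H - x` yields
`τ(H) ≤ 1 + (n - 1 + m - d)/(k + 1) ≤ (n + m - 1)/(k + 1) < (n + m)/(k + 1)`. -/

namespace UHypergraph

variable {α : Type} [DecidableEq α]

theorem mem_delete_edges {H : UHypergraph α} {X : Finset α} {e : Finset α} :
    e ∈ (H.delete X).edges ↔ e ∈ H.edges ∧ ∀ x ∈ X, x ∉ e :=
  Finset.mem_filter

theorem Wellformed.delete {H : UHypergraph α} (hw : H.Wellformed) (X : Finset α) :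
    (H.delete X).Wellformed := by
  intro e he v hv
  obtain ⟨he, hXe⟩ := mem_delete_edges.1 he
  exact Finset.mem_sdiff.2 ⟨hw e he hv, fun hvX => hXe v hvX hv⟩

theorem Uniform.delete {H : UHypergraph α} {k : ℕ} (hu : H.Uniform k) (X : Finset α) :
    (H.delete X).Uniform k :=
  fun e he => hu e (mem_delete_edges.1 he).1

theorem Linear.delete {H : UHypergraph α} (hl : H.Linear) (X : Finset α) :
    (H.delete X).Linear :=
  fun e he f hf => hl e (mem_delete_edges.1 he).1 f (mem_delete_edges.1 hf).1

theorem card_verts_delete_singleton_add_one {H : UHypergraph α} {x : α} (hx : x ∈ H.verts) :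
    (H.delete {x}).verts.card + 1 = H.verts.card := by
  simp only [UHypergraph.delete, Finset.sdiff_singleton_eq_erase]
  exact Finset.card_erase_add_one hx

theorem card_edges_delete_singleton_add_degree (H : UHypergraph α) (x : α) :
    (H.delete {x}).edges.card + H.degree x = H.edges.card := by
  simp only [UHypergraph.delete, degree, Finset.mem_singleton, forall_eq, add_comm]
  exact Finset.card_filter_add_card_filter_not _

theorem tau_le_card {H : UHypergraph α} {T : Finset α} (hT : H.IsTransversal T) :
    H.tau ≤ T.card :=
  Nat.sInf_le ⟨T, hT, rfl⟩

theorem exists_isTransversal_card_eq_tau {H : UHypergraph α} {T : Finset α}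
    (hT : H.IsTransversal T) : ∃ T', H.IsTransversal T' ∧ T'.card = H.tau :=
  Nat.sInf_mem (s := {n | ∃ T : Finset α, H.IsTransversal T ∧ T.card = n})
    ⟨T.card, T, hT, rfl⟩

theorem IsTransversal.erase_delete_singleton {H : UHypergraph α} {T : Finset α}
    (hT : H.IsTransversal T) (x : α) : (H.delete {x}).IsTransversal (T.erase x) := by
  refine ⟨fun v hv => ?_, fun e he => ?_⟩
  · rw [Finset.mem_erase] at hv
    exact Finset.mem_sdiff.2 ⟨hT.1 hv.2, by simpa using hv.1⟩
  · obtain ⟨he, hxe⟩ := mem_delete_edges.1 he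
    obtain ⟨v, hv⟩ := hT.2 e he
    rw [Finset.mem_inter] at hv
    have hvx : v ≠ x := fun h => hxe x (Finset.mem_singleton_self x) (h ▸ hv.2)
    exact ⟨v, Finset.mem_inter.2 ⟨Finset.mem_erase.2 ⟨hvx, hv.1⟩, hv.2⟩⟩

theorem IsTransversal.insert_of_delete_singleton {H : UHypergraph α} {x : α} (hx : x ∈ H.verts)
    {T : Finset α} (hT : (H.delete {x}).IsTransversal T) : H.IsTransversal (insert x T) := by
  refine ⟨Finset.insert_subset hx (hT.1.trans Finset.sdiff_subset), fun e he => ?_⟩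
  by_cases hxe : x ∈ e
  · exact ⟨x, Finset.mem_inter.2 ⟨Finset.mem_insert_self x T, hxe⟩⟩
  · have he' : e ∈ (H.delete {x}).edges := mem_delete_edges.2 ⟨he, by simpa using hxe⟩
    exact (hT.2 e he').mono (Finset.inter_subset_inter_right (Finset.subset_insert x T))

-- If `H` has no transversal at all, `τ(H)` is the junk value `sInf ∅ = 0`.
theorem tau_le_tau_delete_singleton_add_one {H : UHypergraph α} {x : α} (hx : x ∈ H.verts) :
    H.tau ≤ (H.delete {x}).tau + 1 := by
  by_cases hH : ∃ T, H.IsTransversal T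
  · obtain ⟨T, hT⟩ := hH
    obtain ⟨T', hT', hcard⟩ :=
      exists_isTransversal_card_eq_tau (hT.erase_delete_singleton x)
    calc H.tau ≤ (insert x T').card := tau_le_card (hT'.insert_of_delete_singleton hx)
      _ ≤ T'.card + 1 := Finset.card_insert_le x T'
      _ = (H.delete {x}).tau + 1 := by rw [hcard]
  · push Not at hH
    simp [tau, hH]

end UHypergraph

theorem stmt10_general {α : Type} [DecidableEq α] (k : ℕ)
    (hyp : ∀ H' : UHypergraph α, H'.Wellformed → H'.Uniform k → H'.Linear →
      (H'.tau : ℚ) ≤ ((H'.verts.card : ℚ) + (H'.edges.card : ℚ)) / ((k : ℚ) + 1))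
    (H : UHypergraph α) (hw : H.Wellformed) (hu : H.Uniform k) (hl : H.Linear)
    (x : α) (hx : x ∈ H.verts) (hd : k < H.degree x) :
    (H.tau : ℚ) < ((H.verts.card : ℚ) + (H.edges.card : ℚ)) / ((k : ℚ) + 1) := by
  set H' := H.delete {x}
  have hbound := hyp H' (hw.delete {x}) (hu.delete {x}) (hl.delete {x})
  have htau : (H.tau : ℚ) ≤ H'.tau + 1 := by
    exact_mod_cast UHypergraph.tau_le_tau_delete_singleton_add_one hx
  have hn : (H'.verts.card : ℚ) + 1 = H.verts.card := by
    exact_mod_cast UHypergraph.card_verts_delete_singleton_add_one hx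
  have hm : (H'.edges.card : ℚ) + H.degree x = H.edges.card := by
    exact_mod_cast UHypergraph.card_edges_delete_singleton_add_degree H x
  have hdeg : (k : ℚ) + 1 ≤ H.degree x := by exact_mod_cast hd
  have hk : (0 : ℚ) < k + 1 := by positivity
  rw [le_div_iff₀ hk] at hbound
  rw [lt_div_iff₀ hk, ← hn, ← hm]
  calc (H.tau : ℚ) * (k + 1) ≤ (H'.tau + 1) * (k + 1) := by gcongr
    _ ≤ H'.verts.card + H'.edges.card + (k + 1) := by linarith
    _ < H'.verts.card + 1 + (H'.edges.card + H.degree x) := by linarith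

/-- Suppose that for some `k ≥ 2` every `k`-uniform linear hypergraph `H'` satisfies
`τ(H') ≤ (n(H') + m(H'))/(k+1)`. If a `k`-uniform linear hypergraph `H` has a vertex
`x` of degree `d > k`, then `τ(H) < (n(H) + m(H))/(k+1)`. -/
theorem stmt10 {α : Type} [DecidableEq α] (k : ℕ) (hk : 2 ≤ k)
    (hyp : ∀ H' : UHypergraph α, H'.Wellformed → H'.Uniform k → H'.Linear →
      (H'.tau : ℚ) ≤ ((H'.verts.card : ℚ) + (H'.edges.card : ℚ)) / ((k : ℚ) + 1))
    (H : UHypergraph α) (hw : H.Wellformed) (hu : H.Uniform k) (hl : H.Linear)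
    (x : α) (hx : x ∈ H.verts) (hd : k < H.degree x) :
    (H.tau : ℚ) < ((H.verts.card : ℚ) + (H.edges.card : ℚ)) / ((k : ℚ) + 1) :=
  stmt10_general k hyp H hw hu hl x hx hd
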